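/- arXiv:1112.3145 — 6 statements merged into one kernel-verified Lean document; each statement's English description precedes it below -/
import Mathlib

section
/- Under A1–A3 and B4, the operators G_J are shift-equivariant: for every N, every J ∈ Z(N), every x_ℤ ∈ ℓ∞, g, τ ∈ ℓ∞(J) and λ ∈ Λ₀, writing J−1 = {ℓ−1 : ℓ ∈ J} ∈ Z(N) and (βτ)_ℓ = τ_{ℓ+1} for ℓ ∈ J−1, one has G_{J−1}(βx_ℤ, βg, βτ, λ) = (β r_ℤ ; βh) where (r_ℤ ; h) = G_J(x_ℤ, g, τ, λ). In particular, if (x_ℤ, g) solves G_J(x_ℤ, g, τ, λ) = 0, then (βx_ℤ, βg) solves G_{J−1}(βx_ℤ, βg, βτ, λ) = 0; consequently the unique solution maps of the Reduction Theorem satisfy x_{ℤ,J−1}(βτ,λ) = β x_{ℤ,J}(τ,λ) and g_{J−1}(βτ,λ) = β g_J(τ,λ). -/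
open scoped RealInnerProductSpace BigOperators
open Filter

noncomputable section

/-- `Z(N)`: the set of subsets of `ℤ` whose distinct elements have distance at least `N`. -/
def ZN (N : ℕ) : Set (Set ℤ) :=
  {J | ∀ i ∈ J, ∀ j ∈ J, i ≠ j → (N : ℤ) ≤ |i - j|}

/-- the pseudo-orbit `p_n(J) = Σ_{ℓ∈J} x̄_{n-ℓ}`. -/
def pJ {k : ℕ} (xb : ℤ → EuclideanSpace ℝ (Fin k)) (J : Set ℤ) (n : ℤ) :
    EuclideanSpace ℝ (Fin k) :=
  ∑' ℓ : J, xb (n - (ℓ : ℤ))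

/-- `v_n(J,τ) = Σ_{ℓ∈J} τ_ℓ u_{n-ℓ}` (also used for `w_n(J,g) = Σ_{ℓ∈J} g_ℓ w_{n-ℓ}`). -/
def vJ {k : ℕ} (u : ℤ → EuclideanSpace ℝ (Fin k)) (J : Set ℤ) (τ : ℤ → ℝ) (n : ℤ) :
    EuclideanSpace ℝ (Fin k) :=
  ∑' ℓ : J, τ (ℓ : ℤ) • u (n - (ℓ : ℤ))

/-- the pairing `⟨β^{-ℓ}u, x⟩ = Σ_{n∈ℤ} u_{n-ℓ}ᵀ x_n`. -/
def pair {k : ℕ} (u x : ℤ → EuclideanSpace ℝ (Fin k)) (ℓ : ℤ) : ℝ :=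
  ∑' n : ℤ, ⟪u (n - ℓ), x n⟫

/-- the first (ℓ∞-valued) component of `G_J(x,g,τ,λ)`, namely
`F(p(J)+x+v(J,τ),λ) + w(J,g)` evaluated at `n`. -/
def GJfst {k : ℕ} (f : EuclideanSpace ℝ (Fin k) → ℝ → EuclideanSpace ℝ (Fin k))
    (xb u w : ℤ → EuclideanSpace ℝ (Fin k)) (J : Set ℤ)
    (x : ℤ → EuclideanSpace ℝ (Fin k)) (g τ : ℤ → ℝ) (lam : ℝ) (n : ℤ) :
    EuclideanSpace ℝ (Fin k) :=
  (pJ xb J (n + 1) + x (n + 1) + vJ u J τ (n + 1))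
    - f (pJ xb J n + x n + vJ u J τ n) lam + vJ w J g n

/-- the equation `G_J(x,g,τ,λ) = 0`. -/
def GJeq {k : ℕ} (f : EuclideanSpace ℝ (Fin k) → ℝ → EuclideanSpace ℝ (Fin k))
    (xb u w : ℤ → EuclideanSpace ℝ (Fin k)) (J : Set ℤ)
    (x : ℤ → EuclideanSpace ℝ (Fin k)) (g τ : ℤ → ℝ) (lam : ℝ) : Prop :=
  (∀ n : ℤ, GJfst f xb u w J x g τ lam n = 0) ∧ ∀ ℓ ∈ J, pair u x ℓ = 0

/-- the bijection `J ≃ J - 1`. -/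
def shiftEquiv' (J : Set ℤ) : J ≃ ((fun ℓ : ℤ => ℓ - 1) '' J) where
  toFun a := ⟨(a : ℤ) - 1, ⟨a, a.2, rfl⟩⟩
  invFun b := ⟨(b : ℤ) + 1, by
    obtain ⟨a, ha, h⟩ := b.2
    have h' : a - 1 = (b : ℤ) := h
    have : (b : ℤ) + 1 = a := by omega
    rwa [this]⟩
  left_inv a := by ext; simp
  right_inv b := by ext; simp

@[simp] lemma shiftEquiv'_coe (J : Set ℤ) (a : J) :
    ((shiftEquiv' J a : ((fun ℓ : ℤ => ℓ - 1) '' J)) : ℤ) = (a : ℤ) - 1 := rfl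

lemma pJ_shift {k : ℕ} (xb : ℤ → EuclideanSpace ℝ (Fin k)) (J : Set ℤ) (n : ℤ) :
    pJ xb ((fun ℓ : ℤ => ℓ - 1) '' J) n = pJ xb J (n + 1) := by
  unfold pJ
  rw [← Equiv.tsum_eq (shiftEquiv' J)]
  exact tsum_congr fun a => by rw [shiftEquiv'_coe, show n - ((a : ℤ) - 1) = n + 1 - a by ring]

lemma vJ_shift {k : ℕ} (u : ℤ → EuclideanSpace ℝ (Fin k)) (J : Set ℤ) (τ : ℤ → ℝ) (n : ℤ) :
    vJ u ((fun ℓ : ℤ => ℓ - 1) '' J) (fun m => τ (m + 1)) n = vJ u J τ (n + 1) := by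
  unfold vJ
  rw [← Equiv.tsum_eq (shiftEquiv' J)]
  refine tsum_congr fun a => ?_
  show τ ((a : ℤ) - 1 + 1) • u (n - ((a : ℤ) - 1)) = τ a • u (n + 1 - a)
  rw [show (a : ℤ) - 1 + 1 = a by ring, show n - ((a : ℤ) - 1) = n + 1 - a by ring]

lemma pair_shift {k : ℕ} (u x : ℤ → EuclideanSpace ℝ (Fin k)) (ℓ : ℤ) :
    pair u (fun m => x (m + 1)) ℓ = pair u x (ℓ + 1) := by
  unfold pair
  conv_rhs => rw [← Equiv.tsum_eq (Equiv.addRight (1 : ℤ))]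
  refine tsum_congr fun n => ?_
  show (⟪u (n - ℓ), x (n + 1)⟫ : ℝ) = ⟪u (n + 1 - (ℓ + 1)), x (n + 1)⟫
  rw [show n + 1 - (ℓ + 1) = n - ℓ by ring]

lemma GJfst_shift {k : ℕ} (f : EuclideanSpace ℝ (Fin k) → ℝ → EuclideanSpace ℝ (Fin k))
    (xb u w : ℤ → EuclideanSpace ℝ (Fin k)) (J : Set ℤ)
    (x : ℤ → EuclideanSpace ℝ (Fin k)) (g τ : ℤ → ℝ) (lam : ℝ) (n : ℤ) :
    GJfst f xb u w ((fun ℓ : ℤ => ℓ - 1) '' J)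
      (fun m => x (m + 1)) (fun m => g (m + 1)) (fun m => τ (m + 1)) lam n
    = GJfst f xb u w J x g τ lam (n + 1) := by
  unfold GJfst
  rw [pJ_shift, pJ_shift, vJ_shift, vJ_shift, vJ_shift]

lemma GJeq_shift {k : ℕ} (f : EuclideanSpace ℝ (Fin k) → ℝ → EuclideanSpace ℝ (Fin k))
    (xb u w : ℤ → EuclideanSpace ℝ (Fin k)) (J : Set ℤ)
    (x : ℤ → EuclideanSpace ℝ (Fin k)) (g τ : ℤ → ℝ) (lam : ℝ)
    (h : GJeq f xb u w J x g τ lam) :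
    GJeq f xb u w ((fun ℓ : ℤ => ℓ - 1) '' J)
      (fun m => x (m + 1)) (fun m => g (m + 1)) (fun m => τ (m + 1)) lam := by
  refine ⟨fun n => by rw [GJfst_shift]; exact h.1 (n + 1), ?_⟩
  rintro ℓ ⟨a, ha, rfl⟩
  rw [pair_shift, show a - 1 + 1 = a by ring]
  exact h.2 a ha

/-- **Theorem 1.3 (i)** (shift equivariance): the operators `G_J` are equivariant with
respect to the shift, `G_{J-1}(βx, βg, βτ, λ) = β G_J(x, g, τ, λ)`; in particular shifted
solutions are solutions, and the unique solution maps of the Reduction Theorem satisfy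
`x_{ℤ,J-1}(βτ,λ) = β x_{ℤ,J}(τ,λ)` and `g_{J-1}(βτ,λ) = β g_J(τ,λ)`. -/
theorem shift_equivariance
    {k : ℕ}
    (f : EuclideanSpace ℝ (Fin k) → ℝ → EuclideanSpace ℝ (Fin k)) (Λ₀ : Set ℝ)
    -- `Λ₀` is an open neighborhood of `0`
    (hΛopen : IsOpen Λ₀) (hΛzero : (0 : ℝ) ∈ Λ₀)
    -- A1: smoothness of `f` and `f(·,λ)` is a diffeomorphism for every `λ ∈ Λ₀`
    (hsmooth : ContDiffOn ℝ (⊤ : ℕ∞)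
      (fun p : EuclideanSpace ℝ (Fin k) × ℝ => f p.1 p.2) (Set.univ ×ˢ Λ₀))
    (hdiffeo : ∀ lam ∈ Λ₀, ∃ finv : EuclideanSpace ℝ (Fin k) → EuclideanSpace ℝ (Fin k),
      ContDiff ℝ (⊤ : ℕ∞) finv ∧ (∀ x, finv (f x lam) = x) ∧ ∀ y, f (finv y) lam = y)
    -- A2: `0` is a fixed point of `f(·,λ)` for all `λ ∈ Λ₀`
    (hfix : ∀ lam ∈ Λ₀, f 0 lam = 0)
    -- A3: the Jacobian `f_x(0,λ)` (given by the matrix `A λ`) is hyperbolic for `λ ∈ Λ₀`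
    (A : ℝ → Matrix (Fin k) (Fin k) ℝ)
    (hA : ∀ lam ∈ Λ₀, fderiv ℝ (fun x => f x lam) 0
        = LinearMap.toContinuousLinearMap (Matrix.toEuclideanLin (A lam)))
    (hHyp : ∀ lam ∈ Λ₀, ∀ μ ∈ spectrum ℂ ((A lam).map (algebraMap ℝ ℂ)),
        ‖μ‖ ≠ 1)
    -- B4: `x̄` is a nontrivial homoclinic orbit of `f(·,0)` w.r.t. `0`
    (xb u w : ℤ → EuclideanSpace ℝ (Fin k))
    (horbit : ∀ n : ℤ, xb (n + 1) = f (xb n) 0)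
    (hlim1 : Tendsto xb atTop (nhds 0)) (hlim2 : Tendsto xb atBot (nhds 0))
    (hxbne : ∃ n, xb n ≠ 0)
    -- `u` is a bounded nontrivial solution of the variational equation,
    -- unique up to scalar multiples, normalized in `ℓ²`
    (hu : ∀ n : ℤ, u (n + 1) = fderiv ℝ (fun x => f x 0) (xb n) (u n))
    (hune : u ≠ 0)
    (huuniq : ∀ y : ℤ → EuclideanSpace ℝ (Fin k), (∃ C, ∀ n, ‖y n‖ ≤ C) →
      (∀ n : ℤ, y (n + 1) = fderiv ℝ (fun x => f x 0) (xb n) (y n)) →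
      ∃ c : ℝ, ∀ n, y n = c • u n)
    (hunorm : (∑' n : ℤ, ⟪u n, u n⟫) = 1)
    -- `w` is a bounded nontrivial solution of the adjoint equation,
    -- unique up to scalar multiples, normalized in `ℓ²`
    (hw : ∀ n : ℤ, ContinuousLinearMap.adjoint
        (fderiv ℝ (fun x => f x 0) (xb (n + 1))) (w (n + 1)) = w n)
    (hwne : w ≠ 0)
    (hwuniq : ∀ y : ℤ → EuclideanSpace ℝ (Fin k), (∃ C, ∀ n, ‖y n‖ ≤ C) →
      (∀ n : ℤ, ContinuousLinearMap.adjoint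
          (fderiv ℝ (fun x => f x 0) (xb (n + 1))) (y (n + 1)) = y n) →
      ∃ c : ℝ, ∀ n, y n = c • w n)
    (hwnorm : (∑' n : ℤ, ⟪w n, w n⟫) = 1)
    -- exponential decay of `x̄`, `u` and `w`
    (α Ce : ℝ) (hα : 0 < α) (hCe : 0 < Ce)
    (hdecay : ∀ n : ℤ, ‖xb n‖ + ‖u n‖ ≤ Ce * Real.exp (-α * |(n : ℝ)|))
    (hwdecay : ∀ n : ℤ, ‖w n‖ ≤ Ce * Real.exp (-α * |(n : ℝ)|))
    -- data and statement of the Reduction Theorem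
    (C₀ ρx ρg ρτ ρlam : ℝ) (N₀ : ℕ)
    (hC₀ : 0 < C₀) (hρx : 0 < ρx) (hρg : 0 < ρg) (hρτ : 0 < ρτ) (hρlam : 0 < ρlam)
    (hball : ∀ lam : ℝ, |lam| ≤ ρlam → lam ∈ Λ₀)
    (hRed : ∀ N : ℕ, N₀ ≤ N → ∀ J ∈ ZN N,
      ∀ τ : ℤ → ℝ, (∀ ℓ ∈ J, |τ ℓ| ≤ ρτ) → ∀ lam : ℝ, |lam| ≤ ρlam →
      ∃ (x : ℤ → EuclideanSpace ℝ (Fin k)) (g : ℤ → ℝ),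
        (∀ n, ‖x n‖ ≤ ρx) ∧ (∀ ℓ ∈ J, |g ℓ| ≤ ρg) ∧
        GJeq f xb u w J x g τ lam ∧
        ∀ (x' : ℤ → EuclideanSpace ℝ (Fin k)) (g' : ℤ → ℝ),
          (∀ n, ‖x' n‖ ≤ ρx) → (∀ ℓ ∈ J, |g' ℓ| ≤ ρg) →
          GJeq f xb u w J x' g' τ lam →
          (∀ n, x' n = x n) ∧ (∀ ℓ ∈ J, g' ℓ = g ℓ))
    :
    ∀ (N : ℕ) (J : Set ℤ), J ∈ ZN N →
      -- `J - 1 ∈ Z(N)`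
      ((fun ℓ : ℤ => ℓ - 1) '' J ∈ ZN N) ∧
      -- equivariance of `G_J`
      (∀ (x : ℤ → EuclideanSpace ℝ (Fin k)) (g τ : ℤ → ℝ) (lam : ℝ),
        (∀ n : ℤ, GJfst f xb u w ((fun ℓ : ℤ => ℓ - 1) '' J)
            (fun m => x (m + 1)) (fun m => g (m + 1)) (fun m => τ (m + 1)) lam n
          = GJfst f xb u w J x g τ lam (n + 1)) ∧
        (∀ ℓ ∈ (fun ℓ : ℤ => ℓ - 1) '' J,
          pair u (fun m => x (m + 1)) ℓ = pair u x (ℓ + 1)) ∧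
        -- in particular, shifted solutions solve the shifted equation
        (GJeq f xb u w J x g τ lam →
          GJeq f xb u w ((fun ℓ : ℤ => ℓ - 1) '' J)
            (fun m => x (m + 1)) (fun m => g (m + 1)) (fun m => τ (m + 1)) lam)) ∧
      -- consequence for the unique solution maps of the Reduction Theorem
      (N₀ ≤ N → ∀ τ : ℤ → ℝ, (∀ ℓ ∈ J, |τ ℓ| ≤ ρτ) → ∀ lam : ℝ, |lam| ≤ ρlam →
        ∀ (x x' : ℤ → EuclideanSpace ℝ (Fin k)) (g g' : ℤ → ℝ),
          (∀ n, ‖x n‖ ≤ ρx) → (∀ ℓ ∈ J, |g ℓ| ≤ ρg) →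
          GJeq f xb u w J x g τ lam →
          (∀ n, ‖x' n‖ ≤ ρx) → (∀ ℓ ∈ (fun ℓ : ℤ => ℓ - 1) '' J, |g' ℓ| ≤ ρg) →
          GJeq f xb u w ((fun ℓ : ℤ => ℓ - 1) '' J) x' g' (fun m => τ (m + 1)) lam →
          (∀ n : ℤ, x' n = x (n + 1)) ∧
          (∀ ℓ ∈ (fun ℓ : ℤ => ℓ - 1) '' J, g' ℓ = g (ℓ + 1))) := by
  intro N J hJ
  have hJ' : (fun ℓ : ℤ => ℓ - 1) '' J ∈ ZN N := by
    rintro i ⟨a, ha, rfl⟩ j ⟨b, hb, rfl⟩ hij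
    have hij' : a - 1 ≠ b - 1 := hij
    have hab : a ≠ b := by omega
    have := hJ a ha b hb hab
    show (N : ℤ) ≤ |a - 1 - (b - 1)|
    rw [show a - 1 - (b - 1) = a - b by ring]
    exact this
  refine ⟨hJ', fun x g τ lam => ⟨fun n => GJfst_shift f xb u w J x g τ lam n,
    fun ℓ hℓ => by
      obtain ⟨a, ha, rfl⟩ := hℓ
      rw [pair_shift],
    GJeq_shift f xb u w J x g τ lam⟩, ?_⟩
  intro hN τ hτ lam hlam x x' g g' hx hg hsol hx' hg' hsol'
  have hτ' : ∀ ℓ ∈ (fun ℓ : ℤ => ℓ - 1) '' J, |(fun m => τ (m + 1)) ℓ| ≤ ρτ := by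
    rintro ℓ ⟨a, ha, rfl⟩
    simpa [show a - 1 + 1 = a by ring] using hτ a ha
  obtain ⟨x₀, g₀, hx₀, hg₀, heq₀, huniq₀⟩ :=
    hRed N hN _ hJ' (fun m => τ (m + 1)) hτ' lam hlam
  have h1 := huniq₀ x' g' hx' hg' hsol'
  have hgx : ∀ ℓ ∈ (fun ℓ : ℤ => ℓ - 1) '' J, |g (ℓ + 1)| ≤ ρg := by
    rintro ℓ ⟨a, ha, rfl⟩
    simpa [show a - 1 + 1 = a by ring] using hg a ha
  have h2 := huniq₀ (fun m => x (m + 1)) (fun m => g (m + 1)) (fun n => hx (n + 1)) hgx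
    (GJeq_shift f xb u w J x g τ lam hsol)
  exact ⟨fun n => by rw [h1.1 n, ← h2.1 n],
    fun ℓ hℓ => by rw [h1.2 ℓ hℓ, ← h2.2 ℓ hℓ]⟩

end
end

section
/- There exists N₁ ∈ ℕ such that for all N ≥ N₁ and all J ∈ Z(N), the linear system Σ_{k∈J} ⟨β^{−ℓ}u_ℤ, β^{−k}u_ℤ⟩ τ_k = r_ℓ (ℓ ∈ J) has, for every r ∈ ℓ∞(J), a unique solution τ ∈ ℓ∞(J), and this solution satisfies ‖τ‖∞ ≤ 2 ‖r‖∞. -/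
open scoped RealInnerProductSpace BigOperators

set_option maxHeartbeats 2000000

noncomputable section

lemma aux_summable_exp {b : ℝ} (hb : 0 < b) :
    Summable (fun d : ℤ => Real.exp (-b * |(d : ℝ)|)) := by
  have key : ∀ n : ℕ, Real.exp (-b * |((n : ℤ) : ℝ)|) = (Real.exp (-b)) ^ n := by
    intro n; rw [← Real.exp_nat_mul]; congr 1; push_cast
    rw [abs_of_nonneg (by positivity)]; ring
  have hgeo : Summable (fun n : ℕ => (Real.exp (-b)) ^ n) :=
    summable_geometric_of_lt_one (Real.exp_nonneg _)
      (Real.exp_lt_one_iff.mpr (by linarith))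
  apply Summable.of_nat_of_neg
  · exact hgeo.congr fun n => (key n).symm
  · refine hgeo.congr fun n => ?_
    rw [← key n]; congr 1; push_cast; rw [abs_neg]

section aux
variable {k : ℕ} (u : ℤ → EuclideanSpace ℝ (Fin k)) {α Ce : ℝ} (hα : 0 < α) (hCe : 0 < Ce)
    (hdecay : ∀ n : ℤ, ‖u n‖ ≤ Ce * Real.exp (-α * |(n : ℝ)|))

include hα hCe hdecay

lemma aux_term_bound (d n : ℤ) :
    |⟪u n, u (n + d)⟫| ≤ Ce^2 * (Real.exp (-(α/2) * |(d:ℝ)|) * Real.exp (-(α/2) * |(n:ℝ)|)) := by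
  have h1 := abs_real_inner_le_norm (u n) (u (n + d))
  have h2 := hdecay n
  have h3 := hdecay (n + d)
  have hub : (0:ℝ) ≤ ‖u (n+d)‖ := norm_nonneg _
  have hmul : ‖u n‖ * ‖u (n+d)‖ ≤ (Ce * Real.exp (-α * |(n:ℝ)|)) * (Ce * Real.exp (-α * |((n+d:ℤ):ℝ)|)) :=
    mul_le_mul h2 h3 hub (by positivity)
  refine h1.trans (hmul.trans ?_)
  rw [show (Ce * Real.exp (-α * |(n:ℝ)|)) * (Ce * Real.exp (-α * |((n+d:ℤ):ℝ)|))
      = Ce^2 * (Real.exp (-α * |(n:ℝ)|) * Real.exp (-α * |((n+d:ℤ):ℝ)|)) by ring]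
  apply mul_le_mul_of_nonneg_left _ (by positivity)
  rw [← Real.exp_add, ← Real.exp_add]
  apply Real.exp_le_exp.mpr
  have habs : |(d:ℝ)| ≤ |(n:ℝ)| + |((n+d:ℤ):ℝ)| := by
    push_cast
    have h := abs_add_le (-(n:ℝ)) ((n:ℝ)+d)
    simpa [abs_neg, show -(n:ℝ) + ((n:ℝ)+d) = d by ring] using h
  nlinarith [abs_nonneg ((n:ℝ)), abs_nonneg (((n+d:ℤ):ℝ))]

lemma aux_g_summable (d : ℤ) : Summable (fun n : ℤ => ⟪u n, u (n + d)⟫) := by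
  apply Summable.of_norm_bounded
    (((aux_summable_exp (show (0:ℝ) < α/2 by linarith)).mul_left
      (Ce^2 * Real.exp (-(α/2) * |(d:ℝ)|))))
  intro n
  simpa [Real.norm_eq_abs, mul_assoc] using aux_term_bound u hα hCe hdecay d n

lemma aux_g_bound (d : ℤ) :
    |∑' n : ℤ, ⟪u n, u (n + d)⟫| ≤
      (Ce^2 * ∑' p : ℤ, Real.exp (-(α/2) * |(p:ℝ)|)) * Real.exp (-(α/2) * |(d:ℝ)|) := by
  have hs := aux_g_summable u hα hCe hdecay d
  have h1 : |∑' n : ℤ, ⟪u n, u (n + d)⟫| ≤ ∑' n : ℤ, |⟪u n, u (n + d)⟫| := by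
    simpa [Real.norm_eq_abs] using norm_tsum_le_tsum_norm
      (f := fun n : ℤ => ⟪u n, u (n + d)⟫) (hs.abs.congr (by simp [Real.norm_eq_abs]))
  refine h1.trans ?_
  have h2 : ∑' n : ℤ, |⟪u n, u (n + d)⟫| ≤
      ∑' n : ℤ, Ce^2 * (Real.exp (-(α/2) * |(d:ℝ)|) * Real.exp (-(α/2) * |(n:ℝ)|)) := by
    apply Summable.tsum_le_tsum (fun n => aux_term_bound u hα hCe hdecay d n) hs.abs
    exact ((aux_summable_exp (show (0:ℝ) < α/2 by linarith)).mul_left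
      (Ce^2 * Real.exp (-(α/2) * |(d:ℝ)|))).congr fun n => by ring
  refine h2.trans ?_
  rw [tsum_mul_left, tsum_mul_left]
  apply le_of_eq; ring

end aux


/-- **Lemma 5.2**: for `N` large, the Gram-type linear system
`Σ_{k∈J} ⟨β^{-ℓ}u, β^{-k}u⟩ τ_k = r_ℓ  (ℓ ∈ J)` has for every bounded right-hand side
a unique bounded solution `τ` with `‖τ‖∞ ≤ 2‖r‖∞`. -/
theorem gram_system_solvable
    {k : ℕ} (u : ℤ → EuclideanSpace ℝ (Fin k))
    (α Ce : ℝ) (hα : 0 < α) (hCe : 0 < Ce)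
    (hdecay : ∀ n : ℤ, ‖u n‖ ≤ Ce * Real.exp (-α * |(n : ℝ)|))
    (hunorm : (∑' n : ℤ, ⟪u n, u n⟫) = 1) :
    ∃ N₁ : ℕ, ∀ N : ℕ, N₁ ≤ N → ∀ J ∈ ZN N,
      ∀ r : ℤ → ℝ, (∃ C, ∀ ℓ ∈ J, |r ℓ| ≤ C) →
      ∃ τ : ℤ → ℝ,
        ((∃ C, ∀ ℓ ∈ J, |τ ℓ| ≤ C) ∧
          (∀ ℓ ∈ J,
            (∑' m : J, (∑' n : ℤ, ⟪u (n - ℓ), u (n - (m : ℤ))⟫) * τ (m : ℤ)) = r ℓ) ∧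
          -- the bound `‖τ‖∞ ≤ 2‖r‖∞`
          (∀ C : ℝ, (∀ ℓ ∈ J, |r ℓ| ≤ C) → ∀ ℓ ∈ J, |τ ℓ| ≤ 2 * C)) ∧
        -- uniqueness of the bounded solution
        (∀ τ' : ℤ → ℝ, (∃ C, ∀ ℓ ∈ J, |τ' ℓ| ≤ C) →
          (∀ ℓ ∈ J,
            (∑' m : J, (∑' n : ℤ, ⟪u (n - ℓ), u (n - (m : ℤ))⟫) * τ' (m : ℤ)) = r ℓ) →
          ∀ ℓ ∈ J, τ' ℓ = τ ℓ) := by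
  classical
  set β : ℝ := α/2 with hβdef
  have hβ : 0 < β := by positivity
  set γ : ℝ := β/2 with hγdef
  have hγ : 0 < γ := by positivity
  set S : ℝ := ∑' p : ℤ, Real.exp (-β * |(p:ℝ)|) with hSdef
  set S' : ℝ := ∑' p : ℤ, Real.exp (-γ * |(p:ℝ)|) with hS'def
  have hS'sum : Summable (fun p : ℤ => Real.exp (-γ * |(p:ℝ)|)) := aux_summable_exp hγ
  have hS'nonneg : 0 ≤ S' := tsum_nonneg fun p => (Real.exp_pos _).le
  set C₂ : ℝ := Ce^2 * S with hC₂def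
  have hC₂nonneg : 0 ≤ C₂ := by
    have : 0 ≤ S := tsum_nonneg fun p => (Real.exp_pos _).le
    positivity
  -- the Gram coefficients
  set g : ℤ → ℝ := fun d => ∑' n : ℤ, ⟪u n, u (n + d)⟫ with hgdef
  have hgb : ∀ d : ℤ, |g d| ≤ C₂ * Real.exp (-β * |(d:ℝ)|) := fun d =>
    aux_g_bound u hα hCe hdecay d
  have hg0 : g 0 = 1 := by
    rw [hgdef]; simpa using hunorm
  have hG : ∀ ℓ m : ℤ, (∑' n : ℤ, ⟪u (n - ℓ), u (n - m)⟫) = g (ℓ - m) := by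
    intro ℓ m
    rw [hgdef]
    rw [← Equiv.tsum_eq (Equiv.addRight ℓ) (fun n : ℤ => ⟪u (n - ℓ), u (n - m)⟫)]
    apply tsum_congr
    intro p
    simp only [Equiv.coe_addRight]
    rw [show p + ℓ - ℓ = p by ring, show p + ℓ - m = p + (ℓ - m) by ring]
  -- choice of N₁
  set r₀ : ℝ := Real.exp (-β/2) with hr₀def
  have hr₀pos : 0 < r₀ := Real.exp_pos _
  have hr₀lt1 : r₀ < 1 := Real.exp_lt_one_iff.mpr (by linarith)
  set D : ℝ := C₂ * S' + 1 with hDdef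
  have hDpos : 0 < D := by positivity
  obtain ⟨N₁, hN₁⟩ := exists_pow_lt_of_lt_one (show (0:ℝ) < 1/(2*D) by positivity) hr₀lt1
  refine ⟨N₁, ?_⟩
  intro N hN J hJ r hr
  obtain ⟨C₀, hC₀⟩ := hr
  have hsmall : C₂ * S' * r₀ ^ N ≤ 1/2 := by
    have h1 : r₀ ^ N ≤ r₀ ^ N₁ := pow_le_pow_of_le_one hr₀pos.le hr₀lt1.le hN
    have h2 : C₂ * S' * r₀ ^ N ≤ D * (1/(2*D)) := by
      have h3 : C₂ * S' * r₀ ^ N ≤ D * r₀ ^ N := by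
        apply mul_le_mul_of_nonneg_right _ (pow_nonneg hr₀pos.le N)
        linarith
      refine h3.trans ?_
      exact mul_le_mul_of_nonneg_left (h1.trans hN₁.le) hDpos.le
    refine h2.trans ?_
    rw [show D * (1/(2*D)) = 1/2 by field_simp]
  -- the off-diagonal kernel
  set K : ℤ → ℤ → ℝ := fun ℓ m => if m = ℓ then 0 else g (ℓ - m) with hKdef
  -- bound on K entries for elements of J
  have hKb : ∀ ℓ ∈ J, ∀ m ∈ J, |K ℓ m| ≤ (C₂ * r₀ ^ N) * Real.exp (-γ * |(ℓ:ℝ) - (m:ℝ)|) := by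
    intro ℓ hℓ m hm
    by_cases h : m = ℓ
    · simp only [hKdef, h, if_pos rfl, abs_zero]
      positivity
    · have hdist : (N : ℤ) ≤ |ℓ - m| := hJ ℓ hℓ m hm (Ne.symm h)
      have hdistR : (N : ℝ) ≤ |(ℓ:ℝ) - (m:ℝ)| := by
        have := hdist
        push_cast [← Int.cast_abs] at this ⊢
        exact_mod_cast this
      simp only [hKdef, if_neg h]
      have h1 : |g (ℓ - m)| ≤ C₂ * Real.exp (-β * |((ℓ - m : ℤ):ℝ)|) := hgb (ℓ - m)
      have hcast : |((ℓ - m : ℤ):ℝ)| = |(ℓ:ℝ) - (m:ℝ)| := by push_cast; ring_nf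
      rw [hcast] at h1
      refine h1.trans ?_
      have hexp : Real.exp (-β * |(ℓ:ℝ) - (m:ℝ)|) ≤ r₀ ^ N * Real.exp (-γ * |(ℓ:ℝ) - (m:ℝ)|) := by
        rw [hr₀def, ← Real.exp_nat_mul, ← Real.exp_add]
        apply Real.exp_le_exp.mpr
        rw [hγdef]
        nlinarith [hdistR, abs_nonneg ((ℓ:ℝ) - (m:ℝ))]
      calc C₂ * Real.exp (-β * |(ℓ:ℝ) - (m:ℝ)|) ≤ C₂ * (r₀ ^ N * Real.exp (-γ * |(ℓ:ℝ) - (m:ℝ)|)) :=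
            mul_le_mul_of_nonneg_left hexp hC₂nonneg
        _ = (C₂ * r₀ ^ N) * Real.exp (-γ * |(ℓ:ℝ) - (m:ℝ)|) := by ring
  -- summability of the exponential weights over J
  have hinj : ∀ ℓ : ℤ, Function.Injective (fun m : J => ℓ - (m:ℤ)) := by
    intro ℓ m m' h
    simp only at h
    apply Subtype.ext
    omega
  have hexpJ : ∀ ℓ : ℤ, Summable (fun m : J => Real.exp (-γ * |(ℓ:ℝ) - ((m:ℤ):ℝ)|)) := by
    intro ℓ
    have := hS'sum.comp_injective (hinj ℓ)
    refine this.congr fun m => ?_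
    simp only [Function.comp_apply]
    congr 2
    push_cast; ring_nf
  have htsumJ : ∀ ℓ : ℤ, (∑' m : J, Real.exp (-γ * |(ℓ:ℝ) - ((m:ℤ):ℝ)|)) ≤ S' := by
    intro ℓ
    rw [hS'def]
    apply Summable.tsum_le_tsum_of_inj (fun m : J => ℓ - (m:ℤ)) (hinj ℓ)
      (fun c _ => (Real.exp_pos _).le)
    · intro m
      apply le_of_eq
      congr 2
      push_cast; ring_nf
    · exact hexpJ ℓ
    · exact hS'sum
  -- summability of |K| row and row bound
  have hKrow : ∀ ℓ ∈ J, Summable (fun m : J => |K ℓ (m:ℤ)|) := by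
    intro ℓ hℓ
    exact Summable.of_nonneg_of_le (fun m : J => abs_nonneg _)
      (fun m : J => hKb ℓ hℓ (m:ℤ) m.2) ((hexpJ ℓ).mul_left _)
  have hKrowsum : ∀ ℓ ∈ J, (∑' m : J, |K ℓ (m:ℤ)|) ≤ 1/2 := by
    intro ℓ hℓ
    have h1 : (∑' m : J, |K ℓ (m:ℤ)|) ≤ ∑' m : J, (C₂ * r₀ ^ N) * Real.exp (-γ * |(ℓ:ℝ) - ((m:ℤ):ℝ)|) :=
      Summable.tsum_le_tsum (fun m => hKb ℓ hℓ (m:ℤ) m.2) (hKrow ℓ hℓ) ((hexpJ ℓ).mul_left _)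
    rw [tsum_mul_left] at h1
    refine h1.trans ?_
    have h2 : (C₂ * r₀ ^ N) * (∑' m : J, Real.exp (-γ * |(ℓ:ℝ) - ((m:ℤ):ℝ)|)) ≤ (C₂ * r₀ ^ N) * S' :=
      mul_le_mul_of_nonneg_left (htsumJ ℓ) (by positivity)
    refine h2.trans ?_
    calc (C₂ * r₀ ^ N) * S' = C₂ * S' * r₀ ^ N := by ring
      _ ≤ 1/2 := hsmall
  -- the Banach space of bounded families on J
  haveI : Nonempty (BoundedContinuousFunction J ℝ) := ⟨0⟩
  have hKσsum : ∀ (σ : BoundedContinuousFunction J ℝ), ∀ ℓ ∈ J,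
      Summable (fun m : J => K ℓ (m:ℤ) * σ m) := by
    intro σ ℓ hℓ
    apply Summable.of_norm_bounded ((hKrow ℓ hℓ).mul_right ‖σ‖)
    intro m
    rw [Real.norm_eq_abs, abs_mul]
    apply mul_le_mul_of_nonneg_left _ (abs_nonneg _)
    simpa [Real.norm_eq_abs] using σ.norm_coe_le_norm m
  have hKσbd : ∀ (σ : BoundedContinuousFunction J ℝ), ∀ ℓ ∈ J,
      |∑' m : J, K ℓ (m:ℤ) * σ m| ≤ (1/2) * ‖σ‖ := by
    intro σ ℓ hℓ
    have habs : Summable (fun m : J => |K ℓ (m:ℤ) * σ m|) := (hKσsum σ ℓ hℓ).abs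
    have h1 : |∑' m : J, K ℓ (m:ℤ) * σ m| ≤ ∑' m : J, |K ℓ (m:ℤ) * σ m| := by
      have := norm_tsum_le_tsum_norm (f := fun m : J => K ℓ (m:ℤ) * σ m)
        (habs.congr (fun m => (Real.norm_eq_abs _).symm))
      rw [Real.norm_eq_abs] at this
      exact this.trans (le_of_eq (tsum_congr fun m => Real.norm_eq_abs _))
    refine h1.trans ?_
    have h2 : (∑' m : J, |K ℓ (m:ℤ) * σ m|) ≤ ∑' m : J, |K ℓ (m:ℤ)| * ‖σ‖ := by
      apply Summable.tsum_le_tsum _ habs ((hKrow ℓ hℓ).mul_right ‖σ‖)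
      intro m
      rw [abs_mul]
      apply mul_le_mul_of_nonneg_left _ (abs_nonneg _)
      simpa [Real.norm_eq_abs] using σ.norm_coe_le_norm m
    refine h2.trans ?_
    rw [tsum_mul_right]
    exact mul_le_mul_of_nonneg_right (hKrowsum ℓ hℓ) (norm_nonneg _)
  -- the right-hand side as a bounded function
  set br : BoundedContinuousFunction J ℝ :=
    BoundedContinuousFunction.ofNormedAddCommGroup (fun m : J => r m)
      continuous_of_discreteTopology C₀
      (fun m => by simpa [Real.norm_eq_abs] using hC₀ m m.2) with hbrdef
  -- the affine contraction
  set Φ : BoundedContinuousFunction J ℝ → BoundedContinuousFunction J ℝ := fun σ =>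
    br - BoundedContinuousFunction.ofNormedAddCommGroup
      (fun ℓ : J => ∑' m : J, K (ℓ:ℤ) (m:ℤ) * σ m) continuous_of_discreteTopology
      ((1/2) * ‖σ‖) (fun ℓ => by
        simpa [Real.norm_eq_abs] using hKσbd σ (ℓ:ℤ) ℓ.2) with hΦdef
  have hΦapply : ∀ σ : BoundedContinuousFunction J ℝ, ∀ ℓ : J,
      Φ σ ℓ = r (ℓ:ℤ) - ∑' m : J, K (ℓ:ℤ) (m:ℤ) * σ m := by
    intro σ ℓ
    simp [hΦdef, hbrdef]
  have hlip : ∀ σ σ' : BoundedContinuousFunction J ℝ,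
      dist (Φ σ) (Φ σ') ≤ (1/2) * dist σ σ' := by
    intro σ σ'
    rw [dist_eq_norm, dist_eq_norm]
    rw [BoundedContinuousFunction.norm_le (by positivity)]
    intro x
    have heval : (Φ σ - Φ σ') x = ∑' m : J, K (x:ℤ) (m:ℤ) * (σ' - σ) m := by
      rw [BoundedContinuousFunction.sub_apply, hΦapply σ x, hΦapply σ' x,
        show ∀ a b c : ℝ, a - b - (a - c) = c - b from fun a b c => by ring,
        ← Summable.tsum_sub (hKσsum σ' (x:ℤ) x.2) (hKσsum σ (x:ℤ) x.2)]
      apply tsum_congr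
      intro m
      rw [BoundedContinuousFunction.sub_apply]
      ring
    rw [heval, Real.norm_eq_abs]
    have := hKσbd (σ' - σ) (x:ℤ) x.2
    rwa [show ‖σ' - σ‖ = ‖σ - σ'‖ from norm_sub_rev _ _] at this
  have hcontr : ContractingWith (1/2 : NNReal) Φ := by
    refine ⟨?_, ?_⟩
    · have h12 : ((1/2 : NNReal) : ℝ) < ((1:NNReal):ℝ) := by norm_num
      exact_mod_cast h12
    apply LipschitzWith.of_dist_le_mul
    intro σ σ'
    have h := hlip σ σ'
    have hc : ((1/2 : NNReal) : ℝ) = 1/2 := by norm_num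
    rw [hc]
    exact h
  set th := ContractingWith.fixedPoint Φ hcontr with hthdef
  have hfix : Φ th = th := hcontr.fixedPoint_isFixedPt
  -- splitting of the Gram sum
  have hsplit : ∀ σ : BoundedContinuousFunction J ℝ, ∀ ℓ, ∀ hℓ : ℓ ∈ J,
      (∑' m : J, (∑' n : ℤ, ⟪u (n - ℓ), u (n - (m:ℤ))⟫) * σ m)
        = σ ⟨ℓ, hℓ⟩ + ∑' m : J, K ℓ (m:ℤ) * σ m := by
    intro σ ℓ hℓ
    have hterm : ∀ m : J, (∑' n : ℤ, ⟪u (n - ℓ), u (n - (m:ℤ))⟫) * σ m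
        = K ℓ (m:ℤ) * σ m + (if (m:ℤ) = ℓ then σ m else 0) := by
      intro m
      rw [hG ℓ (m:ℤ)]
      by_cases h : (m:ℤ) = ℓ
      · rw [h]
        simp [hKdef, hg0]
      · simp [hKdef, h]
    rw [tsum_congr hterm,
      Summable.tsum_add (hKσsum σ ℓ hℓ)
        (summable_of_ne_finset_zero (s := {(⟨ℓ, hℓ⟩ : J)}) (fun m hm => by
          simp only [Finset.mem_singleton] at hm
          rw [if_neg (fun hc => hm (Subtype.ext hc))])),
      tsum_eq_single (⟨ℓ, hℓ⟩ : J) (fun m hm => if_neg (fun hc => hm (Subtype.ext hc)))]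
    simp [add_comm]
  refine ⟨fun ℓ => if h : ℓ ∈ J then th ⟨ℓ, h⟩ else 0, ⟨⟨‖th‖, ?_⟩, ?_, ?_⟩, ?_⟩
  · -- boundedness
    intro ℓ hℓ
    simp only [dif_pos hℓ]
    simpa [Real.norm_eq_abs] using th.norm_coe_le_norm ⟨ℓ, hℓ⟩
  · -- the equation
    intro ℓ hℓ
    have harg : (fun m : J => (∑' n : ℤ, ⟪u (n - ℓ), u (n - (m:ℤ))⟫) *
        (if h : (m:ℤ) ∈ J then th ⟨(m:ℤ), h⟩ else 0))
        = fun m : J => (∑' n : ℤ, ⟪u (n - ℓ), u (n - (m:ℤ))⟫) * th m := by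
      funext m
      rw [dif_pos m.2]
    rw [harg, hsplit th ℓ hℓ]
    have h1 : th ⟨ℓ, hℓ⟩ = Φ th ⟨ℓ, hℓ⟩ := by rw [hfix]
    rw [hΦapply th ⟨ℓ, hℓ⟩] at h1
    simp only at h1
    linarith [h1]
  · -- the norm bound
    intro C hC ℓ hℓ
    have hC0 : 0 ≤ C := (abs_nonneg _).trans (hC ℓ hℓ)
    have hth : ‖th‖ ≤ C + (1/2) * ‖th‖ := by
      rw [BoundedContinuousFunction.norm_le (by positivity)]
      intro x
      have h1 : th x = Φ th x := by rw [hfix]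
      rw [hΦapply th x] at h1
      rw [Real.norm_eq_abs, h1]
      have h2 := hKσbd th (x:ℤ) x.2
      have h3 := hC (x:ℤ) x.2
      calc |r (x:ℤ) - ∑' m : J, K (x:ℤ) (m:ℤ) * th m|
          ≤ |r (x:ℤ)| + |∑' m : J, K (x:ℤ) (m:ℤ) * th m| := abs_sub _ _
        _ ≤ C + (1/2) * ‖th‖ := add_le_add h3 h2
    have hth2 : ‖th‖ ≤ 2 * C := by linarith
    simp only [dif_pos hℓ]
    calc |th ⟨ℓ, hℓ⟩| ≤ ‖th‖ := by
          simpa [Real.norm_eq_abs] using th.norm_coe_le_norm ⟨ℓ, hℓ⟩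
      _ ≤ 2 * C := hth2
  · -- uniqueness
    rintro τ' ⟨C', hC'⟩ heq ℓ hℓ
    set σ' : BoundedContinuousFunction J ℝ :=
      BoundedContinuousFunction.ofNormedAddCommGroup (fun m : J => τ' m)
        continuous_of_discreteTopology C'
        (fun m => by simpa [Real.norm_eq_abs] using hC' m m.2) with hσ'def
    have hσ'apply : ∀ m : J, σ' m = τ' (m:ℤ) := by
      intro m; simp [hσ'def]
    have hfp : Function.IsFixedPt Φ σ' := by
      apply BoundedContinuousFunction.ext
      intro x
      have h1 := heq (x:ℤ) x.2
      have harg : (fun m : J => (∑' n : ℤ, ⟪u (n - (x:ℤ)), u (n - (m:ℤ))⟫) * τ' (m:ℤ))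
          = fun m : J => (∑' n : ℤ, ⟪u (n - (x:ℤ)), u (n - (m:ℤ))⟫) * σ' m := by
        funext m
        rw [hσ'apply m]
      rw [harg, hsplit σ' (x:ℤ) x.2] at h1
      rw [hΦapply σ' x]
      have h2 : σ' ⟨(x:ℤ), x.2⟩ = σ' x := by congr
      rw [h2] at h1
      linarith [h1]
    have huniq : σ' = th := hcontr.fixedPoint_unique hfp
    simp only [dif_pos hℓ]
    rw [← huniq]
    rw [hσ'apply ⟨ℓ, hℓ⟩]


end
end

section
/- Let α > 0 and 0 < a₀ < α. Then there exists a constant K₀ > 0, depending only on a₀ and α, such that for every a ∈ [0, a₀] and every pair of extended integers −∞ ≤ n_l ≤ n_r ≤ ∞ (excluding the cases n_l = n_r = −∞ and n_l = n_r = +∞), the weight function ω_n = min( e^{a(n−n_l)}, 1, e^{a(n_r−n)} ) (where a factor with infinite endpoint is omitted from the minimum) satisfies Σ_{m∈ℤ} e^{−α|n−m−1|} ω_m ≤ K₀ ω_n for all n ∈ ℤ. -/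
open scoped BigOperators

noncomputable section

/-- the weight function `ω_n(a, n_l, n_r) = min(e^{a(n-n_l)}, 1, e^{a(n_r-n)})`;
the endpoints are extended integers, where `none` stands for `n_l = -∞`
(resp. `n_r = +∞`), in which case the corresponding factor drops out of the minimum. -/
def weight (a : ℝ) (nl nr : Option ℤ) (n : ℤ) : ℝ :=
  min (nl.elim 1 fun m => Real.exp (a * ((n : ℝ) - (m : ℝ))))
    (min 1 (nr.elim 1 fun m => Real.exp (a * ((m : ℝ) - (n : ℝ)))))

lemma weight_pos (a : ℝ) (nl nr : Option ℤ) (n : ℤ) : 0 < weight a nl nr n := by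
  unfold weight
  apply lt_min <;> [skip; apply lt_min] <;> first
  | exact one_pos
  | (cases nl <;> cases nr <;> simp [Real.exp_pos])

lemma weight_le (a : ℝ) (ha : 0 ≤ a) (nl nr : Option ℤ) (m n : ℤ) :
    weight a nl nr m ≤ Real.exp (a * |(n : ℝ) - (m : ℝ)|) * weight a nl nr n := by
  set E := Real.exp (a * |(n : ℝ) - (m : ℝ)|) with hE
  have hE1 : (1 : ℝ) ≤ E := by
    rw [hE]; exact Real.one_le_exp (mul_nonneg ha (abs_nonneg _))
  have hEpos : (0 : ℝ) ≤ E := le_trans zero_le_one hE1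
  unfold weight
  rw [mul_min_of_nonneg _ _ hEpos, mul_min_of_nonneg _ _ hEpos]
  have hmn : (m : ℝ) - n ≤ |(n : ℝ) - m| := by
    rw [abs_sub_comm]; exact le_abs_self _
  have hnm : (n : ℝ) - m ≤ |(n : ℝ) - m| := le_abs_self _
  refine min_le_min ?_ (min_le_min ?_ ?_)
  · cases nl with
    | none => simpa using hE1
    | some ml =>
      simp only [Option.elim, hE, ← Real.exp_add]
      apply Real.exp_le_exp.mpr
      nlinarith
  · simpa using hE1
  · cases nr with
    | none => simpa using hE1
    | some mr =>
      simp only [Option.elim, hE, ← Real.exp_add]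
      apply Real.exp_le_exp.mpr
      nlinarith

/-- **Lemma 6.2** (plateau lemma): exponentially decaying kernels preserve the weights
`ω(a, n_l, n_r)`, uniformly for `0 ≤ a ≤ a₀ < α` and all admissible endpoints. -/
theorem plateau_lemma (α a₀ : ℝ) (hα : 0 < α) (ha₀ : 0 < a₀) (ha₀α : a₀ < α) :
    ∃ K₀ : ℝ, 0 < K₀ ∧
      ∀ a : ℝ, 0 ≤ a → a ≤ a₀ →
      ∀ nl nr : Option ℤ, (∀ ml mr : ℤ, nl = some ml → nr = some mr → ml ≤ mr) →
      ∀ n : ℤ,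
        (∑' m : ℤ, Real.exp (-α * |(n : ℝ) - (m : ℝ) - 1|) * weight a nl nr m)
          ≤ K₀ * weight a nl nr n := by
  set β := α - a₀ with hβdef
  have hβ : 0 < β := by simp [hβdef]; linarith
  have hq : Real.exp (-β) < 1 := Real.exp_lt_one_iff.mpr (by linarith)
  have hqnn : (0:ℝ) ≤ Real.exp (-β) := (Real.exp_pos _).le
  have hkey : ∀ s : ℕ → ℤ, (∀ k : ℕ, |(s k : ℝ)| = k) →
      Summable fun k : ℕ => Real.exp (-β * |((s k : ℤ) : ℝ)|) := by
    intro s hs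
    have : (fun k : ℕ => Real.exp (-β * |((s k : ℤ) : ℝ)|))
        = fun k : ℕ => Real.exp (-β) ^ k := by
      funext k
      rw [hs k, ← Real.exp_nat_mul, mul_comm]
    rw [this]
    exact summable_geometric_of_lt_one hqnn hq
  have hsum : Summable fun k : ℤ => Real.exp (-β * |(k : ℝ)|) := by
    apply Summable.of_nat_of_neg
    · exact hkey (fun k => (k : ℤ)) (by intro k; simp)
    · exact hkey (fun k => -(k : ℤ)) (by intro k; simp)
  set C := ∑' k : ℤ, Real.exp (-β * |(k : ℝ)|) with hC
  have hC1 : (1:ℝ) ≤ C := by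
    have h := Summable.le_tsum hsum 0 (fun i _ => (Real.exp_pos _).le)
    rw [hC]
    simpa using h
  refine ⟨Real.exp a₀ * C, by positivity, ?_⟩
  intro a ha haa₀ nl nr _hnlr n
  set ω := weight a nl nr with hω
  have hωpos : 0 < ω n := weight_pos a nl nr n
  -- the dominating function
  set g : ℤ → ℝ := fun m => Real.exp a₀ * ω n * Real.exp (-β * |(n : ℝ) - m - 1|) with hg
  have hfg : ∀ m : ℤ, Real.exp (-α * |(n : ℝ) - (m : ℝ) - 1|) * ω m ≤ g m := by
    intro m
    have h1 : ω m ≤ Real.exp (a * |(n : ℝ) - m|) * ω n := weight_le a ha nl nr m n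
    have h2 : Real.exp (-α * |(n : ℝ) - (m : ℝ) - 1|) * (Real.exp (a * |(n : ℝ) - m|) * ω n)
        ≤ g m := by
      rw [hg]
      have hx : |(n : ℝ) - m| ≤ |(n : ℝ) - m - 1| + 1 := by
        have := abs_sub_abs_le_abs_sub ((n : ℝ) - m) ((n : ℝ) - m - 1)
        have h1' : |(n : ℝ) - m - ((n : ℝ) - m - 1)| = 1 := by norm_num
        linarith [abs_sub_abs_le_abs_sub ((n : ℝ) - m) ((n : ℝ) - m - 1), h1'.le]
      have : Real.exp (-α * |(n : ℝ) - (m : ℝ) - 1|) * Real.exp (a * |(n : ℝ) - m|)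
          ≤ Real.exp a₀ * Real.exp (-β * |(n : ℝ) - m - 1|) := by
        rw [← Real.exp_add, ← Real.exp_add]
        apply Real.exp_le_exp.mpr
        have hay : a * |(n : ℝ) - m| ≤ a₀ * (|(n : ℝ) - (m : ℝ) - 1| + 1) :=
          mul_le_mul haa₀ hx (abs_nonneg _) ha₀.le
        simp only [hβdef]
        nlinarith [abs_nonneg ((n : ℝ) - m - 1)]
      calc Real.exp (-α * |(n : ℝ) - (m : ℝ) - 1|) * (Real.exp (a * |(n : ℝ) - m|) * ω n)
          = (Real.exp (-α * |(n : ℝ) - (m : ℝ) - 1|) * Real.exp (a * |(n : ℝ) - m|)) * ω n := by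
            ring
        _ ≤ (Real.exp a₀ * Real.exp (-β * |(n : ℝ) - m - 1|)) * ω n :=
            mul_le_mul_of_nonneg_right this hωpos.le
        _ = Real.exp a₀ * ω n * Real.exp (-β * |(n : ℝ) - m - 1|) := by ring
    calc Real.exp (-α * |(n : ℝ) - (m : ℝ) - 1|) * ω m
        ≤ Real.exp (-α * |(n : ℝ) - (m : ℝ) - 1|) * (Real.exp (a * |(n : ℝ) - m|) * ω n) :=
          mul_le_mul_of_nonneg_left h1 (Real.exp_pos _).le
      _ ≤ g m := h2
  have hre : ∀ m : ℤ, Real.exp (-β * |(n : ℝ) - m - 1|)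
      = Real.exp (-β * |(((n - 1 - m : ℤ)) : ℝ)|) := by
    intro m; push_cast; ring_nf
  have hgsum' : Summable fun m : ℤ => Real.exp (-β * |(n : ℝ) - m - 1|) := by
    have : (fun m : ℤ => Real.exp (-β * |(n : ℝ) - m - 1|))
        = (fun k : ℤ => Real.exp (-β * |(k : ℝ)|)) ∘ (Equiv.subLeft (n - 1)) := by
      funext m; simp only [Function.comp, Equiv.subLeft_apply]; exact hre m
    rw [this, (Equiv.subLeft (n - 1)).summable_iff]
    exact hsum
  have hgsum : Summable g := (hgsum'.mul_left _)
  have hfsum : Summable fun m : ℤ => Real.exp (-α * |(n : ℝ) - (m : ℝ) - 1|) * ω m :=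
    Summable.of_nonneg_of_le
      (fun m => mul_nonneg (Real.exp_pos _).le (weight_pos a nl nr m).le) hfg hgsum
  have h1 : (∑' m : ℤ, Real.exp (-α * |(n : ℝ) - (m : ℝ) - 1|) * ω m) ≤ ∑' m, g m :=
    Summable.tsum_le_tsum hfg hfsum hgsum
  have h2 : (∑' m, g m) = Real.exp a₀ * ω n * C := by
    rw [hg, tsum_mul_left]
    congr 1
    have : (∑' m : ℤ, Real.exp (-β * |(n : ℝ) - m - 1|))
        = ∑' m : ℤ, Real.exp (-β * |((((Equiv.subLeft (n-1)) m : ℤ)) : ℝ)|) := by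
      apply tsum_congr; intro m; rw [hre m]; simp only [Equiv.subLeft_apply]
    rw [this, (Equiv.subLeft (n - 1)).tsum_eq (fun k : ℤ => Real.exp (-β * |(k : ℝ)|))]
  rw [h2] at h1
  calc (∑' m : ℤ, Real.exp (-α * |(n : ℝ) - (m : ℝ) - 1|) * ω m)
      ≤ Real.exp a₀ * ω n * C := h1
    _ = Real.exp a₀ * C * ω n := by ring


end
end

section
/- Every LR-cycle in the labeled graph G has length 4m for some integer m ≥ 1; in particular the length of every LR-cycle is a positive multiple of 4. -/
/-- labeled edges of the transition graph `G` on `Sⁿ = {0,1,2,3}ⁿ`: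
`lab = true` codes an `R`-edge (rule R2), `lab = false` an `L`-edge (rule R3);
rule R1 (the vertices differ in exactly one coordinate, by one step on the
cycle `0-1-2-3-0`) is built in. -/
def labEdge (n : ℕ) (lab : Bool) (s t : Fin n → Fin 4) : Prop :=
  ∃ j : Fin n, (∀ i : Fin n, i ≠ j → s i = t i) ∧
    (cond lab
      -- R-edges (rule R2)
      ((((s j = 0 ∧ t j = 1) ∨ (s j = 1 ∧ t j = 0)) ∨
        (((s j = 2 ∧ t j = 3) ∨ (s j = 3 ∧ t j = 2)) ∧
          ∀ i : Fin n, s i = 2 ∨ s i = 3)))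
      -- L-edges (rule R3)
      ((((s j = 1 ∧ t j = 2) ∨ (s j = 2 ∧ t j = 1)) ∨
        (((s j = 0 ∧ t j = 3) ∨ (s j = 3 ∧ t j = 0)) ∧
          ∀ i : Fin n, s i = 0 ∨ s i = 3))))

/-- an `LR`-cycle of length `m` in the graph `G`: a closed walk
`v 0, v 1, …, v (m-1), v m = v 0` along labeled edges whose labels alternate
cyclically between `L` and `R`. -/
structure LRCycle (n m : ℕ) where
  v : ZMod m → (Fin n → Fin 4)
  lab : ZMod m → Bool
  edge : ∀ i : ZMod m, labEdge n (lab i) (v i) (v (i + 1))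
  alt : ∀ i : ZMod m, lab (i + 1) = !lab i

/-- indicator (mod 2) of membership in `{1,2}` -/
def chi : Fin 4 → ZMod 2 := fun a => if a = 1 ∨ a = 2 then 1 else 0

lemma edge_chi {n : ℕ} {b : Bool} {s t : Fin n → Fin 4} (h : labEdge n b s t) :
    (∑ i, chi (t i)) = (∑ i, chi (s i)) + (if b then 1 else 0) := by
  obtain ⟨j, hoff, hj⟩ := h
  have hsum : ∀ u : Fin n → Fin 4,
      (∑ i, chi (u i)) = chi (u j) + ∑ i ∈ Finset.univ.erase j, chi (u i) := by
    intro u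
    exact (Finset.add_sum_erase _ _ (Finset.mem_univ j)).symm
  rw [hsum t, hsum s]
  have hrest : ∑ i ∈ Finset.univ.erase j, chi (t i)
      = ∑ i ∈ Finset.univ.erase j, chi (s i) := by
    refine Finset.sum_congr rfl fun i hi => ?_
    rw [hoff i (Finset.ne_of_mem_erase hi)]
  rw [hrest]
  have key : chi (t j) = chi (s j) + (if b then 1 else 0) := by
    cases b <;> simp only [cond] at hj <;>
      rcases hj with (⟨h1, h2⟩ | ⟨h1, h2⟩) | ⟨(⟨h1, h2⟩ | ⟨h1, h2⟩), _⟩ <;>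
      rw [h1, h2] <;> decide
  rw [key]; ring

lemma bool_bit (x : Bool) :
    (if x then (1 : ZMod 2) else 0) + (if !x then (1 : ZMod 2) else 0) = 1 := by
  cases x <;> decide

/-- **Theorem 4.2, step (i)**: every `LR`-cycle in `G` has length `4m` with `m ≥ 1`. -/
theorem lr_cycle_length_multiple_of_four (n m : ℕ) (hn : 1 ≤ n) (hm : 1 ≤ m)
    (c : LRCycle n m) : ∃ p : ℕ, 1 ≤ p ∧ m = 4 * p := by
  -- Step 1: m is even
  set B : ZMod m → ZMod 2 := fun i => if c.lab i then 1 else 0 with hB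
  have hBstep : ∀ i : ZMod m, B (i + 1) = B i + 1 := by
    intro i
    have := c.alt i
    simp only [hB, this]
    cases c.lab i <;> decide
  have hBnat : ∀ k : ℕ, B (k : ZMod m) = B 0 + (k : ZMod 2) := by
    intro k
    induction k with
    | zero => simp
    | succ k ih =>
      push_cast
      rw [hBstep, ih]
      ring
  have hm2 : (m : ZMod 2) = 0 := by
    have := hBnat m
    rw [ZMod.natCast_self] at this
    exact (left_eq_add.mp this)
  obtain ⟨q, hq⟩ : 2 ∣ m := (ZMod.natCast_eq_zero_iff m 2).mp hm2
  -- Step 2: the invariant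
  set f : ZMod m → ZMod 2 := fun i => ∑ k, chi (c.v i k) with hf
  have hstep : ∀ i : ZMod m, f (i + 1) = f i + (if c.lab i then 1 else 0) :=
    fun i => edge_chi (c.edge i)
  have htwo : ∀ i : ZMod m, f (i + 2) = f i + 1 := by
    intro i
    have : i + 2 = (i + 1) + 1 := by ring
    rw [this, hstep, hstep, c.alt i, add_assoc, bool_bit]
  have hnat : ∀ j : ℕ, f ((2 * j : ℕ) : ZMod m) = f 0 + (j : ZMod 2) := by
    intro j
    induction j with
    | zero => simp
    | succ j ih =>
      have h1 : ((2 * (j + 1) : ℕ) : ZMod m) = ((2 * j : ℕ) : ZMod m) + 2 := by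
        push_cast; ring
      rw [h1, htwo, ih]
      push_cast
      ring
  have hq2 : (q : ZMod 2) = 0 := by
    have := hnat q
    rw [← hq, ZMod.natCast_self] at this
    exact (left_eq_add.mp this)
  obtain ⟨p, hp⟩ : 2 ∣ q := (ZMod.natCast_eq_zero_iff q 2).mp hq2
  refine ⟨p, ?_, by omega⟩
  omega
end

section
/- There is no LR-cycle in the labeled graph G that contains the vertex s² = (2,…,2) but does not contain the vertex s⁰ = (0,…,0); equivalently, every LR-cycle through s² also passes through s⁰. -/
/-- **Theorem 4.2, step (iii)**: every `LR`-cycle in `G` that contains `s² = (2,…,2)`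
also contains `s⁰ = (0,…,0)`. -/
theorem lr_cycle_through_s2_contains_s0 (n m : ℕ) (hn : 1 ≤ n) (hm : 1 ≤ m)
    (c : LRCycle n m)
    (h2 : ∃ i : ZMod m, c.v i = fun _ => (2 : Fin 4)) :
    ∃ i : ZMod m, c.v i = fun _ => (0 : Fin 4) := by
  classical
  by_contra h0
  push_neg at h0
  obtain ⟨i0, hi0⟩ := h2
  haveI : NeZero m := ⟨by omega⟩
  -- parity of the coordinate sum
  set P : (Fin n → Fin 4) → ZMod 2 := fun s => ∑ i, ((s i).val : ZMod 2) with hPdef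
  have flip : ∀ (b : Bool) (s t : Fin n → Fin 4), labEdge n b s t → P t = P s + 1 := by
    rintro b s t ⟨j, hoff, hj⟩
    have key : ∀ i, ((t i).val : ZMod 2) + ((s i).val : ZMod 2) =
        if i = j then 1 else 0 := by
      intro i
      by_cases hij : i = j
      · subst hij
        rw [if_pos rfl]
        cases b <;> simp only [Bool.cond_false, Bool.cond_true] at hj <;>
          rcases hj with ((⟨h1, h2⟩ | ⟨h1, h2⟩) | ⟨(⟨h1, h2⟩ | ⟨h1, h2⟩), _⟩) <;>
            rw [h1, h2] <;> decide
      · rw [if_neg hij, ← hoff i hij]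
        exact CharTwo.add_self_eq_zero _
    have hsum : P t + P s = 1 := by
      have h1 : (∑ i, (((t i).val : ZMod 2) + ((s i).val : ZMod 2))) = 1 := by
        rw [Finset.sum_congr rfl fun i _ => key i]
        simp
      simpa [hPdef, Finset.sum_add_distrib] using h1
    have lem : ∀ x y : ZMod 2, x + y = 1 → x = y + 1 := by decide
    exact lem _ _ hsum
  -- the alternating invariant
  set phi : ZMod m → ZMod 2 := fun i => (cond (c.lab i) 1 0) + P (c.v i) with hphidef
  have haux : ∀ (b : Bool) (x : ZMod 2), (cond (!b) 1 0) + (x + 1) = cond b 1 0 + x := by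
    decide
  have hstep : ∀ i, phi (i + 1) = phi i := by
    intro i
    show (cond (c.lab (i + 1)) 1 0) + P (c.v (i + 1)) = _
    rw [c.alt i, flip (c.lab i) _ _ (c.edge i)]
    exact haux _ _
  have cover : ∀ (Pr : ZMod m → Prop) (a : ZMod m),
      (∀ k : ℕ, Pr (a + (k : ZMod m))) → ∀ j, Pr j := by
    intro Pr a h j
    have e : a + (((j - a).val : ℕ) : ZMod m) = j := by
      rw [ZMod.natCast_val, ZMod.cast_id]; ring
    have h' := h (j - a).val
    rwa [e] at h'
  have hconst : ∀ j : ZMod m, phi j = phi i0 := by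
    refine cover _ i0 ?_
    intro k
    induction k with
    | zero => simp
    | succ k ih =>
      have e : (i0 + ((k + 1 : ℕ) : ZMod m)) = (i0 + (k : ZMod m)) + 1 := by
        push_cast; ring
      rw [e, hstep, ih]
  have Ps2 : P (fun _ => (2 : Fin 4)) = 0 :=
    Finset.sum_eq_zero (fun i _ => show (((2 : Fin 4)).val : ZMod 2) = 0 by decide)
  -- the label is the same at every visit of s²
  have labAt : ∀ j : ZMod m, c.v j = (fun _ => (2 : Fin 4)) → c.lab j = c.lab i0 := by
    intro j hj
    have h := hconst j
    rw [hphidef] at h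
    simp only at h
    rw [hj, hi0, Ps2, add_zero, add_zero] at h
    have lem : ∀ a b : Bool, (cond a 1 0 : ZMod 2) = cond b 1 0 → a = b := by decide
    exact lem _ _ h
  cases hc : c.lab i0 with
  | false =>
    -- all states on the cycle are 3-free; but the edge into s² must come from a 3.
    have prop : ∀ j : ZMod m, ∀ i, c.v j i ≠ 3 := by
      refine cover _ i0 ?_
      intro k
      induction k with
      | zero =>
        intro i
        simp only [Nat.cast_zero, add_zero, hi0]
        intro h
        have h' : (2 : Fin 4) = 3 := h
        exact absurd h' (by decide)
      | succ k ih =>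
        have e : (i0 + ((k + 1 : ℕ) : ZMod m)) = (i0 + (k : ZMod m)) + 1 := by
          push_cast; ring
        rw [e]
        set x := i0 + (k : ZMod m) with hx
        obtain ⟨j, hoff, hj⟩ := c.edge x
        intro i hi3
        by_cases hij : i = j
        · subst hij
          cases hb : c.lab x <;> rw [hb] at hj <;>
            simp only [Bool.cond_false, Bool.cond_true] at hj
          · rcases hj with ((⟨h1, h2⟩ | ⟨h1, h2⟩) | ⟨(⟨h1, h2⟩ | ⟨h1, h2⟩), hall⟩)
            · rw [h2] at hi3; exact absurd hi3 (by decide)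
            · rw [h2] at hi3; exact absurd hi3 (by decide)
            · -- 0 → 3 special: all coordinates in {0,3}, hence all 0 : state is s⁰
              exact h0 x (funext fun i' => by
                rcases hall i' with h | h
                · exact h
                · exact absurd h (ih i'))
            · rw [h2] at hi3; exact absurd hi3 (by decide)
          · rcases hj with ((⟨h1, h2⟩ | ⟨h1, h2⟩) | ⟨(⟨h1, h2⟩ | ⟨h1, h2⟩), hall⟩)
            · rw [h2] at hi3; exact absurd hi3 (by decide)
            · rw [h2] at hi3; exact absurd hi3 (by decide)
            · -- 2 → 3 special: all coordinates in {2,3}, hence all 2 : state is s²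
              have hs2 : c.v x = (fun _ => (2 : Fin 4)) := funext fun i' => by
                rcases hall i' with h | h
                · exact h
                · exact absurd h (ih i')
              have := labAt x hs2
              rw [hb, hc] at this
              exact absurd this (by decide)
            · exact absurd h1 (ih _)
        · exact ih i (by rw [hoff i hij]; exact hi3)
    -- the edge into s² at i0
    have e1 : (i0 - 1) + 1 = i0 := by ring
    have hlabprev : c.lab (i0 - 1) = true := by
      have h := c.alt (i0 - 1)
      rw [e1, hc] at h
      cases hb : c.lab (i0 - 1)
      · rw [hb] at h; exact absurd h (by decide)
      · rfl
    obtain ⟨j, hoff, hj⟩ := c.edge (i0 - 1)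
    rw [hlabprev] at hj
    simp only [Bool.cond_true] at hj
    have htj : c.v ((i0 - 1) + 1) j = 2 := by rw [e1, hi0]
    rcases hj with ((⟨h1, h2⟩ | ⟨h1, h2⟩) | ⟨(⟨h1, h2⟩ | ⟨h1, h2⟩), hall⟩)
    · rw [h2] at htj; exact absurd htj (by decide)
    · rw [h2] at htj; exact absurd htj (by decide)
    · rw [h2] at htj; exact absurd htj (by decide)
    · exact prop (i0 - 1) j h1
  | true =>
    -- every state after s² contains a 3; but s² itself does not.
    have base : ∃ i, c.v (i0 + 1) i = 3 := by
      obtain ⟨j, hoff, hj⟩ := c.edge i0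
      rw [hc] at hj
      simp only [Bool.cond_true] at hj
      have hsj : c.v i0 j = 2 := by rw [hi0]
      rcases hj with ((⟨h1, h2⟩ | ⟨h1, h2⟩) | ⟨(⟨h1, h2⟩ | ⟨h1, h2⟩), hall⟩)
      · rw [hsj] at h1; exact absurd h1 (by decide)
      · rw [hsj] at h1; exact absurd h1 (by decide)
      · exact ⟨j, h2⟩
      · rw [hsj] at h1; exact absurd h1 (by decide)
    have prop : ∀ k : ℕ, ∃ i, c.v (i0 + 1 + (k : ZMod m)) i = 3 := by
      intro k
      induction k with
      | zero => simpa using base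
      | succ k ih =>
        have e : (i0 + 1 + ((k + 1 : ℕ) : ZMod m)) = (i0 + 1 + (k : ZMod m)) + 1 := by
          push_cast; ring
        rw [e]
        set x := i0 + 1 + (k : ZMod m) with hx
        obtain ⟨i, hi⟩ := ih
        obtain ⟨j, hoff, hj⟩ := c.edge x
        by_cases hij : i = j
        · subst hij
          cases hb : c.lab x <;> rw [hb] at hj <;>
            simp only [Bool.cond_false, Bool.cond_true] at hj
          · rcases hj with ((⟨h1, h2⟩ | ⟨h1, h2⟩) | ⟨(⟨h1, h2⟩ | ⟨h1, h2⟩), hall⟩)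
            · rw [hi] at h1; exact absurd h1 (by decide)
            · rw [hi] at h1; exact absurd h1 (by decide)
            · rw [hi] at h1; exact absurd h1 (by decide)
            · -- 3 → 0 special : either a 3 survives, or the target is s⁰
              by_cases hex : ∃ i', c.v (x + 1) i' = 3
              · exact hex
              · push_neg at hex
                refine absurd ?_ (h0 (x + 1))
                funext i'
                show c.v (x + 1) i' = 0
                by_cases hij' : i' = i
                · rw [hij']; exact h2
                · have heq := (hoff i' hij').symm
                  rcases hall i' with h | h
                  · rw [heq, h]
                  · exact absurd (heq.trans h) (hex i')
          · rcases hj with ((⟨h1, h2⟩ | ⟨h1, h2⟩) | ⟨(⟨h1, h2⟩ | ⟨h1, h2⟩), hall⟩)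
            · rw [hi] at h1; exact absurd h1 (by decide)
            · rw [hi] at h1; exact absurd h1 (by decide)
            · rw [hi] at h1; exact absurd h1 (by decide)
            · -- 3 → 2 special : either a 3 survives, or the target is s², label clash
              by_cases hex : ∃ i', c.v (x + 1) i' = 3
              · exact hex
              · push_neg at hex
                have hs2 : c.v (x + 1) = (fun _ => (2 : Fin 4)) := funext fun i' => by
                  by_cases hij' : i' = i
                  · rw [hij']; exact h2
                  · have heq := (hoff i' hij').symm
                    rcases hall i' with h | h
                    · rw [heq, h]
                    · exact absurd (heq.trans h) (hex i')
                have hl1 := labAt (x + 1) hs2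
                have hl2 := c.alt x
                rw [hb, hc] at *
                rw [hl1] at hl2
                exact absurd hl2 (by decide)
        · exact ⟨i, by rw [← hoff i hij]; exact hi⟩
    have efin : (i0 + 1 + ((m - 1 : ℕ) : ZMod m)) = i0 := by
      have : ((m - 1 : ℕ) : ZMod m) = (m : ZMod m) - 1 := by
        push_cast [Nat.cast_sub hm]; ring
      rw [this, ZMod.natCast_self]; ring
    obtain ⟨i, hi⟩ := prop (m - 1)
    rw [efin, hi0] at hi
    have hi' : (2 : Fin 4) = 3 := hi
    exact absurd hi' (by decide)
end

section
/- Let G̃ be the labeled graph obtained from G by deleting the vertex s⁰ = (0,…,0) together with all edges incident to it, and additionally deleting all R-edges incident to s² = (2,…,2). Let V₃ = { s ∈ Sⁿ : s_j = 3 for some j ∈ {1,…,n} }. Then there is no LR-path in G̃ from s² to any vertex of V₃, i.e. no walk in G̃ starting at s² and ending in V₃ whose consecutive edge labels alternate between L and R. -/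
/-- edges of the reduced graph `G̃`: edges of `G` that are not incident to
`s⁰ = (0,…,0)`, with the `R`-edges incident to `s² = (2,…,2)` removed as well. -/
def labEdgeT (n : ℕ) (lab : Bool) (s t : Fin n → Fin 4) : Prop :=
  labEdge n lab s t ∧
    s ≠ (fun _ => (0 : Fin 4)) ∧ t ≠ (fun _ => (0 : Fin 4)) ∧
    (lab = true → s ≠ (fun _ => (2 : Fin 4)) ∧ t ≠ (fun _ => (2 : Fin 4)))

/-- **Theorem 4.2, final step**: in the reduced graph `G̃` there is no `LR`-path from
`s² = (2,…,2)` to the set `V₃` of vertices having some coordinate equal to `3`. -/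
theorem no_lr_path_to_V3 (n : ℕ) (hn : 1 ≤ n) :
    ¬ ∃ (m : ℕ) (v : ℕ → (Fin n → Fin 4)) (lab : ℕ → Bool),
        v 0 = (fun _ => (2 : Fin 4)) ∧
        (∃ j : Fin n, v m j = (3 : Fin 4)) ∧
        (∀ i : ℕ, i < m → labEdgeT n (lab i) (v i) (v (i + 1))) ∧
        (∀ i : ℕ, i + 1 < m → lab (i + 1) = !lab i) := by
  rintro ⟨m, v, lab, h0, ⟨j, hj⟩, hedge, -⟩
  have key : ∀ i, i ≤ m → ∀ k : Fin n, v i k ≠ 3 := by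
    intro i
    induction i with
    | zero =>
      intro _ k
      rw [h0]
      show (2 : Fin 4) ≠ 3
      decide
    | succ i ih =>
      intro hle k h3
      have hi : i < m := Nat.lt_of_succ_le hle
      have ihk := ih (le_of_lt hi)
      obtain ⟨he, hs0, -, hR⟩ := hedge i hi
      obtain ⟨p, hoth, hcond⟩ := he
      by_cases hk : k = p
      · subst hk
        cases hl : lab i <;> rw [hl] at hcond hR <;> simp only [cond] at hcond
        · rcases hcond with (⟨-, ht⟩ | ⟨-, ht⟩) | ⟨(⟨-, -⟩ | ⟨hs, -⟩), hall⟩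
          · exact absurd (ht.symm.trans h3) (by decide)
          · exact absurd (ht.symm.trans h3) (by decide)
          · apply hs0
            funext x
            rcases hall x with h | h
            · exact h
            · exact absurd h (ihk x)
          · exact ihk k hs
        · rcases hcond with (⟨-, ht⟩ | ⟨-, ht⟩) | ⟨(⟨-, -⟩ | ⟨hs, -⟩), hall⟩
          · exact absurd (ht.symm.trans h3) (by decide)
          · exact absurd (ht.symm.trans h3) (by decide)
          · apply (hR rfl).1
            funext x
            rcases hall x with h | h
            · exact h
            · exact absurd h (ihk x)
          · exact ihk k hs
      · exact ihk k ((hoth k hk).trans h3)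
  exact key m le_rfl j hj
end
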